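/- arXiv:2510.19062 — 3 statements merged into one kernel-verified Lean document; each statement's English description precedes it below -/
import Mathlib

section
/- Let $D \in \mathbb{N}$, $D \ge 1$, and let $\Theta : [-1,1]^D \to [-1,1]$ be Lipschitz continuous with Lipschitz constant $K$ (with respect to the Euclidean norm on $[-1,1]^D$). Fix bit lengths $n_a \le n_a'$ for $a = 1,\dots,D$. Let $U'$ be the diagonal matrix on $\mathbb{C}^{\mathbb{F}_2^{n_1'} \times \cdots \times \mathbb{F}_2^{n_D'}}$ whose diagonal entry at index $(x_1',\dots,x_D')$ is $e^{i\pi \Theta(\overline{x_1'},\dots,\overline{x_D'})}$, and let $V$ be the diagonal matrix on the same space whose diagonal entry at $(x_1',\dots,x_D')$ is $e^{i\pi \Theta(\overline{x_1},\dots,\overline{x_D})}$, where $x_a \in \mathbb{F}_2^{n_a}$ consists of the first $n_a$ bits of $x_a'$. Then the $\ell^2$ operator norm satisfies $\|U' - V\| \le 2\pi K \sqrt{\sum_{a=1}^D 4^{-n_a}}$. -/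
open scoped Matrix.Norms.L2Operator

/-- The signed dyadic value of a bitstring `x ∈ 𝔽₂^n`:
`x̄ = -x₀ + ∑_{a=1}^{n-1} x_a 2^{-a} ∈ [-1, 1)`. -/
noncomputable def barVal {n : ℕ} (x : Fin n → Bool) : ℝ :=
  ∑ a : Fin n, if x a then (if (a : ℕ) = 0 then -1 else (2 : ℝ) ^ (-(a : ℕ) : ℤ)) else 0

/-- The cube `[-1,1]^D` in Euclidean space. -/
def unitBox (D : ℕ) : Set (EuclideanSpace ℝ (Fin D)) :=
  (WithLp.equiv 2 (Fin D → ℝ)) ⁻¹' Set.univ.pi fun _ => Set.Icc (-1 : ℝ) 1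

/-!
Truncating `x'_a` to its first `n_a` bits discards a tail of the dyadic expansion, which moves
`x̄'_a` by at most `∑_{i ≥ n_a} 2^{-i} = 2 · 2^{-n_a}`; hence the two sample points are at
Euclidean distance at most `2 √(∑_a 4^{-n_a})`, and the Lipschitz bound on `Θ` controls the
phase difference of every diagonal entry. Since `θ ↦ e^{iθ}` is `1`-Lipschitz and the operator
norm of a diagonal matrix is the largest modulus of its entries, the bound follows.
-/

open Finset Complex
open scoped Real

noncomputable def barTerm {n : ℕ} (x : Fin n → Bool) (i : ℕ) : ℝ :=
  if h : i < n then (if x ⟨i, h⟩ then (if i = 0 then -1 else (2 : ℝ) ^ (-(i : ℤ))) else 0) else 0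

lemma sum_Ico_two_inv_pow_le (m n : ℕ) : ∑ i ∈ Ico m n, (2⁻¹ : ℝ) ^ i ≤ 2 * 2⁻¹ ^ m :=
  (geom_sum_Ico_le_of_lt_one (by norm_num) (by norm_num)).trans_eq (by ring)

section BarVal

variable {n : ℕ} (x : Fin n → Bool)

lemma barVal_eq_sum_range : barVal x = ∑ i ∈ range n, barTerm x i :=
  sum_fin_eq_sum_range _

lemma abs_barTerm_le (i : ℕ) : |barTerm x i| ≤ 2⁻¹ ^ i := by
  unfold barTerm
  split_ifs <;> simp_all [inv_pow]

lemma barTerm_nonneg {i : ℕ} (hi : i ≠ 0) : 0 ≤ barTerm x i := by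
  unfold barTerm
  split_ifs <;> positivity

lemma barTerm_zero_mem_Icc : barTerm x 0 ∈ Set.Icc (-1 : ℝ) 0 := by
  unfold barTerm
  split_ifs <;> simp_all

lemma barVal_mem_Icc : barVal x ∈ Set.Icc (-1 : ℝ) 1 := by
  rcases n.eq_zero_or_pos with rfl | hn
  · simp [barVal]
  rw [barVal_eq_sum_range, sum_range_eq_add_Ico _ hn]
  have tail_nonneg : 0 ≤ ∑ i ∈ Ico 1 n, barTerm x i :=
    sum_nonneg fun i hi => barTerm_nonneg x (by grind)
  have tail_le : ∑ i ∈ Ico 1 n, barTerm x i ≤ 1 :=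
    calc ∑ i ∈ Ico 1 n, barTerm x i ≤ ∑ i ∈ Ico 1 n, (2⁻¹ : ℝ) ^ i :=
          sum_le_sum fun i _ => (le_abs_self _).trans (abs_barTerm_le x i)
      _ ≤ 1 := (sum_Ico_two_inv_pow_le 1 n).trans_eq (by norm_num)
  obtain ⟨lead_ge, lead_le⟩ := barTerm_zero_mem_Icc x
  constructor <;> linarith

end BarVal

section Truncation

variable {n n' : ℕ} (h : n ≤ n') (x : Fin n' → Bool)

lemma barVal_sub_barVal_castLE :
    barVal x - barVal (fun i : Fin n => x (Fin.castLE h i)) = ∑ i ∈ Ico n n', barTerm x i := by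
  have truncate : ∀ i ∈ range n,
      barTerm (fun j : Fin n => x (Fin.castLE h j)) i = barTerm x i := fun i hi => by
    have hi : i < n := mem_range.1 hi
    simp [barTerm, hi, hi.trans_le h]
  rw [barVal_eq_sum_range, barVal_eq_sum_range, sum_congr rfl truncate, sum_Ico_eq_sub _ h]

lemma abs_barVal_sub_barVal_castLE_le :
    |barVal x - barVal (fun i : Fin n => x (Fin.castLE h i))| ≤ 2 * 2⁻¹ ^ n := by
  rw [barVal_sub_barVal_castLE]
  exact (abs_sum_le_sum_abs _ _).trans <|
    (sum_le_sum fun i _ => abs_barTerm_le x i).trans (sum_Ico_two_inv_pow_le n n')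

end Truncation

lemma toLp_mem_unitBox {D : ℕ} {y : Fin D → ℝ} (h : ∀ a, y a ∈ Set.Icc (-1 : ℝ) 1) :
    (WithLp.equiv 2 (Fin D → ℝ)).symm y ∈ unitBox D :=
  Set.mem_univ_pi.2 h

lemma EuclideanSpace.dist_le_sqrt_sum_sq {ι : Type*} [Fintype ι] {x y : EuclideanSpace ℝ ι}
    {c : ι → ℝ} (h : ∀ i, |x i - y i| ≤ c i) : dist x y ≤ √(∑ i, c i ^ 2) := by
  rw [EuclideanSpace.dist_eq]
  gcongr with i
  exact h i

lemma norm_exp_I_mul_sub_exp_I_mul_le (s t : ℝ) :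
    ‖exp (I * s) - exp (I * t)‖ ≤ |s - t| := by
  have : exp (I * s) - exp (I * t) = exp (I * t) * (exp (I * ↑(s - t)) - 1) := by
    rw [mul_sub, ← Complex.exp_add]; push_cast; ring_nf
  rw [this, norm_mul, norm_exp_I_mul_ofReal, one_mul]
  exact Real.norm_exp_I_mul_ofReal_sub_one_le

lemma Matrix.l2_opNorm_diagonal_exp_sub_le {m : Type*} [Fintype m] [DecidableEq m]
    (f g : m → ℝ) {C : ℝ} (hC : 0 ≤ C) (h : ∀ i, |f i - g i| ≤ C) :
    ‖diagonal (fun i => exp (π * I * f i)) - diagonal (fun i => exp (π * I * g i))‖ ≤ π * C := by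
  rw [diagonal_sub, l2_opNorm_diagonal]
  refine (pi_norm_le_iff_of_nonneg (by positivity)).2 fun i => ?_
  have phase : ∀ θ : ℝ, (π : ℂ) * I * θ = I * ↑(π * θ) := fun θ => by push_cast; ring
  calc ‖exp (π * I * f i) - exp (π * I * g i)‖ ≤ |π * f i - π * g i| := by
        simpa only [phase] using norm_exp_I_mul_sub_exp_I_mul_le (π * f i) (π * g i)
    _ = π * |f i - g i| := by rw [← mul_sub, abs_mul, abs_of_pos Real.pi_pos]
    _ ≤ π * C := by gcongr; exact h i

lemma sqrt_sum_sq_two_mul_two_inv_pow {ι : Type*} [Fintype ι] (m : ι → ℕ) :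
    √(∑ a, (2 * 2⁻¹ ^ m a : ℝ) ^ 2) = 2 * √(∑ a, (4 : ℝ) ^ (-(m a : ℤ))) := by
  have square : ∀ a, (2 * 2⁻¹ ^ m a : ℝ) ^ 2 = 2 ^ 2 * 4 ^ (-(m a : ℤ)) := fun a => by
    rw [zpow_neg, zpow_natCast, mul_pow, ← pow_mul, mul_comm (m a), pow_mul, inv_pow, inv_pow]
    norm_num
  simp_rw [square, ← mul_sum]
  rw [Real.sqrt_mul (by norm_num), Real.sqrt_sq (by norm_num)]

theorem diagonal_unitary_truncation_bound_general (D : ℕ)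
    (Θ : EuclideanSpace ℝ (Fin D) → ℝ) (K : NNReal)
    (hLip : LipschitzOnWith K Θ (unitBox D))
    (n n' : Fin D → ℕ) (hnn' : ∀ a, n a ≤ n' a)
    (U' V : Matrix (∀ a : Fin D, Fin (n' a) → Bool)
      (∀ a : Fin D, Fin (n' a) → Bool) ℂ)
    (hU' : U' = Matrix.diagonal fun x =>
      Complex.exp ((Real.pi : ℂ) * Complex.I *
        ((Θ ((WithLp.equiv 2 (Fin D → ℝ)).symm fun a => barVal (x a)) : ℝ) : ℂ)))
    (hV : V = Matrix.diagonal fun x =>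
      Complex.exp ((Real.pi : ℂ) * Complex.I *
        ((Θ ((WithLp.equiv 2 (Fin D → ℝ)).symm fun a =>
          barVal fun i : Fin (n a) => x a (Fin.castLE (hnn' a) i)) : ℝ) : ℂ))) :
    ‖U' - V‖ ≤ 2 * Real.pi * (K : ℝ) *
      Real.sqrt (∑ a : Fin D, (4 : ℝ) ^ (-(n a : ℕ) : ℤ)) := by
  subst hU' hV
  have mem_box {m : Fin D → ℕ} (y : ∀ a, Fin (m a) → Bool) :
      (WithLp.equiv 2 (Fin D → ℝ)).symm (fun a => barVal (y a)) ∈ unitBox D :=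
    toLp_mem_unitBox fun a => barVal_mem_Icc (y a)
  refine (Matrix.l2_opNorm_diagonal_exp_sub_le _ _
    (C := K * (2 * √(∑ a, (4 : ℝ) ^ (-(n a : ℤ))))) (by positivity) fun x => ?_).trans_eq
    (by ring)
  rw [← Real.dist_eq, ← sqrt_sum_sq_two_mul_two_inv_pow]
  calc _ ≤ K * dist _ _ := hLip.dist_le_mul _ (mem_box x) _ (mem_box _)
    _ ≤ _ := by
      gcongr
      exact EuclideanSpace.dist_le_sqrt_sum_sq fun a =>
        abs_barVal_sub_barVal_castLE_le (hnn' a) (x a)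

/-- Truncation stability of the diagonal phase unitary of a Lipschitz function:
if `Θ : [-1,1]^D → [-1,1]` is `K`-Lipschitz (Euclidean norm), `U'` is the
diagonal matrix with entries `e^{iπΘ(x̄'_1,…,x̄'_D)}` and `V` the one whose entry
at `x'` uses the truncations `x_a` of `x'_a` to the first `n_a ≤ n'_a` bits, then
`‖U' - V‖ ≤ 2πK √(∑_a 4^{-n_a})` in ℓ² operator norm. -/
theorem diagonal_unitary_truncation_bound (D : ℕ) (hD : 1 ≤ D)
    (Θ : EuclideanSpace ℝ (Fin D) → ℝ) (K : NNReal)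
    (hLip : LipschitzOnWith K Θ (unitBox D))
    (hmap : Set.MapsTo Θ (unitBox D) (Set.Icc (-1 : ℝ) 1))
    (n n' : Fin D → ℕ) (hn : ∀ a, 1 ≤ n a) (hnn' : ∀ a, n a ≤ n' a)
    (U' V : Matrix (∀ a : Fin D, Fin (n' a) → Bool)
      (∀ a : Fin D, Fin (n' a) → Bool) ℂ)
    (hU' : U' = Matrix.diagonal fun x =>
      Complex.exp ((Real.pi : ℂ) * Complex.I *
        ((Θ ((WithLp.equiv 2 (Fin D → ℝ)).symm fun a => barVal (x a)) : ℝ) : ℂ)))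
    (hV : V = Matrix.diagonal fun x =>
      Complex.exp ((Real.pi : ℂ) * Complex.I *
        ((Θ ((WithLp.equiv 2 (Fin D → ℝ)).symm fun a =>
          barVal fun i : Fin (n a) => x a (Fin.castLE (hnn' a) i)) : ℝ) : ℂ))) :
    ‖U' - V‖ ≤ 2 * Real.pi * (K : ℝ) *
      Real.sqrt (∑ a : Fin D, (4 : ℝ) ^ (-(n a : ℕ) : ℤ)) :=
  diagonal_unitary_truncation_bound_general D Θ K hLip n n' hnn' U' V hU' hV
end

section
/- Let $A$ be a real symmetric $N \times N$ matrix with nonnegative entries, having at most $\rho$ nonzero entries in each row ($\rho \ge 1$), and let $\mu := \max_{p,q}|A_{pq}| > 0$. For each column $j$ define the vector $\psi_j \in \mathbb{C}^2 \otimes \mathbb{C}^2 \otimes \mathbb{C}^N \otimes \mathbb{C}^N$ by $\psi_j = \frac{1}{\sqrt{\rho}} \sum_{p : A_{pj} \ne 0} \left( \sqrt{A_{pj}/\mu}\, |0\rangle + \sqrt{1 - A_{pj}/\mu}\, |1\rangle \right) \otimes |0\rangle \otimes |p\rangle \otimes |j\rangle$, and for each row $k$ define $\chi_k = \frac{1}{\sqrt{\rho}}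 \sum_{p : A_{kp} \ne 0} |0\rangle \otimes \left( \sqrt{A_{kp}/\mu}\, |0\rangle + \sqrt{1 - A_{kp}/\mu}\, |1\rangle \right) \otimes |k\rangle \otimes |p\rangle$. Then for all $j, k$: $\langle \chi_k, \psi_j \rangle = \frac{A_{kj}}{\rho\, \mu}$, and $\|\psi_j\| \le 1$ and $\|\chi_k\| \le 1$, with equality when the corresponding row/column has exactly $\rho$ nonzero entries. -/
/-!
Both states have real amplitudes. `χ_k` is supported on `|0⟩ ⊗ · ⊗ |k⟩ ⊗ ·` and `ψ_j` on
`· ⊗ |0⟩ ⊗ · ⊗ |j⟩`, so their supports meet only in `|0, 0, k, j⟩`, where the amplitudes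
multiply to `ρ⁻¹ (√(A_kj/μ))² = A_kj / (ρ μ)`. Each nonzero entry of column `j` contributes
`ρ⁻¹ (a + (1 - a)) = ρ⁻¹` to `‖ψ_j‖²`, so `‖ψ_j‖²` is the number of nonzero entries of the column
divided by `ρ`; and `χ_k` is `ψ_k` built from `Aᵀ`, with the registers swapped.
-/

open Finset Matrix

namespace DSparse

noncomputable def qubitAmp (a : ℝ) (s : Fin 2) : ℝ := if s = 0 then √a else √(1 - a)

theorem sum_qubitAmp_sq {a : ℝ} (h0 : 0 ≤ a) (h1 : a ≤ 1) : ∑ s, qubitAmp a s ^ 2 = 1 := by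
  simp [qubitAmp, Fin.sum_univ_two, Real.sq_sqrt h0, Real.sq_sqrt (sub_nonneg.2 h1)]

variable {ι : Type*} [DecidableEq ι]

noncomputable def columnState (ρ : ℕ) (μ : ℝ) (A : Matrix ι ι ℝ) (j : ι) :
    EuclideanSpace ℂ (Fin 2 × Fin 2 × ι × ι) :=
  WithLp.toLp 2 fun (s, t, p, q) =>
    if t = 0 ∧ q = j ∧ A p j ≠ 0 then (((√ρ)⁻¹ * qubitAmp (A p j / μ) s : ℝ) : ℂ) else 0

noncomputable def rowState (ρ : ℕ) (μ : ℝ) (A : Matrix ι ι ℝ) (k : ι) :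
    EuclideanSpace ℂ (Fin 2 × Fin 2 × ι × ι) :=
  WithLp.toLp 2 fun (s, t, p, q) =>
    if s = 0 ∧ p = k ∧ A k q ≠ 0 then (((√ρ)⁻¹ * qubitAmp (A k q / μ) t : ℝ) : ℂ) else 0

variable {ρ : ℕ} {μ : ℝ} {A : Matrix ι ι ℝ}

theorem columnState_apply (j : ι) (s t : Fin 2) (p q : ι) :
    columnState ρ μ A j (s, t, p, q) =
      if t = 0 ∧ q = j ∧ A p j ≠ 0 then (((√ρ)⁻¹ * qubitAmp (A p j / μ) s : ℝ) : ℂ) else 0 :=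
  rfl

theorem rowState_apply (k : ι) (s t : Fin 2) (p q : ι) :
    rowState ρ μ A k (s, t, p, q) =
      if s = 0 ∧ p = k ∧ A k q ≠ 0 then (((√ρ)⁻¹ * qubitAmp (A k q / μ) t : ℝ) : ℂ) else 0 :=
  rfl

variable [Fintype ι]

theorem inner_rowState_columnState (j k : ι) (h0 : 0 ≤ A k j / μ) :
    inner ℂ (rowState ρ μ A k) (columnState ρ μ A j) = ((A k j / (ρ * μ) : ℝ) : ℂ) := by
  rw [PiLp.inner_apply, Finset.sum_eq_single (0, 0, k, j)]
  · simp only [rowState_apply, columnState_apply, true_and, RCLike.inner_apply,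
      apply_ite (starRingEnd ℂ), Complex.conj_ofReal, map_zero]
    split_ifs with h
    · rw [← Complex.ofReal_mul]
      congr 1
      rw [qubitAmp, if_pos rfl, mul_mul_mul_comm, Real.mul_self_sqrt h0, ← mul_inv,
        Real.mul_self_sqrt (Nat.cast_nonneg _)]
      ring
    · simp_all
  · rintro ⟨s, t, p, q⟩ - hne
    simp only [rowState_apply, columnState_apply]
    split_ifs <;> simp_all
  · simp

theorem norm_columnState_sq {j : ι} (h0 : ∀ p, 0 ≤ A p j / μ) (h1 : ∀ p, A p j / μ ≤ 1) :
    ‖columnState ρ μ A j‖ ^ 2 = #{p | A p j ≠ 0} / ρ := by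
  calc ‖columnState ρ μ A j‖ ^ 2
      = ∑ p, if A p j ≠ 0 then (ρ : ℝ)⁻¹ * ∑ s, qubitAmp (A p j / μ) s ^ 2 else 0 := by
        rw [EuclideanSpace.norm_sq_eq]
        simp [Fintype.sum_prod_type, columnState_apply, ite_and, apply_ite (‖·‖ ^ 2), mul_pow,
          mul_add, ← Finset.sum_add_distrib, ite_add_ite]
    _ = ∑ p, if A p j ≠ 0 then (ρ : ℝ)⁻¹ else 0 := by
        simp only [sum_qubitAmp_sq (h0 _) (h1 _), mul_one]
    _ = #{p | A p j ≠ 0} / ρ := by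
        rw [Finset.sum_ite, Finset.sum_const_zero, add_zero, Finset.sum_const, nsmul_eq_mul,
          div_eq_mul_inv]

theorem norm_columnState_le_one {j : ι} (h0 : ∀ p, 0 ≤ A p j / μ) (h1 : ∀ p, A p j / μ ≤ 1)
    (hcard : #{p | A p j ≠ 0} ≤ ρ) : ‖columnState ρ μ A j‖ ≤ 1 := by
  rw [← sq_le_one_iff₀ (norm_nonneg _), norm_columnState_sq h0 h1]
  exact div_le_one_of_le₀ (mod_cast hcard) (Nat.cast_nonneg _)

theorem norm_columnState_eq_one {j : ι} (h0 : ∀ p, 0 ≤ A p j / μ) (h1 : ∀ p, A p j / μ ≤ 1)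
    (hρ : ρ ≠ 0) (hcard : #{p | A p j ≠ 0} = ρ) : ‖columnState ρ μ A j‖ = 1 := by
  rw [← pow_eq_one_iff_of_nonneg (norm_nonneg _) two_ne_zero, norm_columnState_sq h0 h1, hcard]
  exact div_self (Nat.cast_ne_zero.2 hρ)

theorem norm_rowState (k : ι) : ‖rowState ρ μ A k‖ = ‖columnState ρ μ Aᵀ k‖ := by
  let swap : Fin 2 × Fin 2 × ι × ι → Fin 2 × Fin 2 × ι × ι := fun (s, t, p, q) => (t, s, q, p)
  simp only [EuclideanSpace.norm_eq]
  congr 1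
  exact Fintype.sum_equiv ⟨swap, swap, fun _ => rfl, fun _ => rfl⟩ _ _ fun _ => rfl

end DSparse

open DSparse

theorem d_sparse_state_overlap_general (N ρ : ℕ) (hρ : 1 ≤ ρ)
    (A : Matrix (Fin N) (Fin N) ℝ) (hsymm : A.IsSymm)
    (hnonneg : ∀ p q, 0 ≤ A p q)
    (hsparse : ∀ p, (Finset.univ.filter fun q => A p q ≠ 0).card ≤ ρ)
    (μ : ℝ) (hμ : IsGreatest {x : ℝ | ∃ p q, x = |A p q|} μ)
    (ψ χ : Fin N → EuclideanSpace ℂ (Fin 2 × Fin 2 × Fin N × Fin N))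
    (hψ : ∀ j s t p q, ψ j (s, t, p, q) =
      if t = 0 ∧ q = j ∧ A p j ≠ 0 then
        ((((Real.sqrt ρ)⁻¹ *
          (if s = 0 then Real.sqrt (A p j / μ)
           else Real.sqrt (1 - A p j / μ))) : ℝ) : ℂ)
      else 0)
    (hχ : ∀ k s t p q, χ k (s, t, p, q) =
      if s = 0 ∧ p = k ∧ A k q ≠ 0 then
        ((((Real.sqrt ρ)⁻¹ *
          (if t = 0 then Real.sqrt (A k q / μ)
           else Real.sqrt (1 - A k q / μ))) : ℝ) : ℂ)
      else 0) :
    (∀ j k, (inner ℂ (χ k) (ψ j) : ℂ) = ((A k j / (ρ * μ) : ℝ) : ℂ)) ∧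
    (∀ j, ‖ψ j‖ ≤ 1) ∧ (∀ k, ‖χ k‖ ≤ 1) ∧
    (∀ j, (Finset.univ.filter fun p => A p j ≠ 0).card = ρ → ‖ψ j‖ = 1) ∧
    (∀ k, (Finset.univ.filter fun q => A k q ≠ 0).card = ρ → ‖χ k‖ = 1) := by
  obtain rfl : ψ = columnState ρ μ A := funext fun j => by ext ⟨s, t, p, q⟩; exact hψ j s t p q
  obtain rfl : χ = rowState ρ μ A := funext fun k => by ext ⟨s, t, p, q⟩; exact hχ k s t p q
  have hμ0 : 0 ≤ μ := by
    obtain ⟨p, q, rfl⟩ := hμ.1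
    exact abs_nonneg _
  have h0 (p q) : 0 ≤ A p q / μ := div_nonneg (hnonneg p q) hμ0
  have h1 (p q) : A p q / μ ≤ 1 := div_le_one_of_le₀ ((le_abs_self _).trans (hμ.2 ⟨p, q, rfl⟩)) hμ0
  have hcol (j) : #{p | A p j ≠ 0} ≤ ρ := by simpa only [hsymm.apply j] using hsparse j
  have hρ0 : ρ ≠ 0 := Nat.one_le_iff_ne_zero.1 hρ
  refine ⟨fun j k => inner_rowState_columnState j k (h0 k j),
    fun j => norm_columnState_le_one (h0 · j) (h1 · j) (hcol j),
    fun k => (norm_rowState k).trans_le (norm_columnState_le_one (h0 k) (h1 k) (hsparse k)),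
    fun j hj => norm_columnState_eq_one (h0 · j) (h1 · j) hρ0 hj,
    fun k hk => (norm_rowState k).trans (norm_columnState_eq_one (h0 k) (h1 k) hρ0 hk)⟩

/-- Core identity of the `d`-sparse block encoding: for a real symmetric
nonnegative matrix `A` with at most `ρ` nonzeros per row and max entry `μ > 0`,
the prepared states `ψ_j` and `χ_k` satisfy `⟨χ_k, ψ_j⟩ = A_{kj}/(ρ μ)` and are
subnormalized, with norm exactly `1` when the corresponding column/row has
exactly `ρ` nonzero entries. -/
theorem d_sparse_state_overlap (N ρ : ℕ) (hN : 0 < N) (hρ : 1 ≤ ρ)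
    (A : Matrix (Fin N) (Fin N) ℝ) (hsymm : A.IsSymm)
    (hnonneg : ∀ p q, 0 ≤ A p q)
    (hsparse : ∀ p, (Finset.univ.filter fun q => A p q ≠ 0).card ≤ ρ)
    (μ : ℝ) (hμ : IsGreatest {x : ℝ | ∃ p q, x = |A p q|} μ) (hμpos : 0 < μ)
    (ψ χ : Fin N → EuclideanSpace ℂ (Fin 2 × Fin 2 × Fin N × Fin N))
    (hψ : ∀ j s t p q, ψ j (s, t, p, q) =
      if t = 0 ∧ q = j ∧ A p j ≠ 0 then
        ((((Real.sqrt ρ)⁻¹ *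
          (if s = 0 then Real.sqrt (A p j / μ)
           else Real.sqrt (1 - A p j / μ))) : ℝ) : ℂ)
      else 0)
    (hχ : ∀ k s t p q, χ k (s, t, p, q) =
      if s = 0 ∧ p = k ∧ A k q ≠ 0 then
        ((((Real.sqrt ρ)⁻¹ *
          (if t = 0 then Real.sqrt (A k q / μ)
           else Real.sqrt (1 - A k q / μ))) : ℝ) : ℂ)
      else 0) :
    (∀ j k, (inner ℂ (χ k) (ψ j) : ℂ) = ((A k j / (ρ * μ) : ℝ) : ℂ)) ∧
    (∀ j, ‖ψ j‖ ≤ 1) ∧ (∀ k, ‖χ k‖ ≤ 1) ∧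
    (∀ j, (Finset.univ.filter fun p => A p j ≠ 0).card = ρ → ‖ψ j‖ = 1) ∧
    (∀ k, (Finset.univ.filter fun q => A k q ≠ 0).card = ρ → ‖χ k‖ = 1) :=
  d_sparse_state_overlap_general N ρ hρ A hsymm hnonneg hsparse μ hμ ψ χ hψ hχ
end

section
/- Let $T$ be a unitary $N \times N$ complex matrix with columns $u_k := T e_k$ for $k = 1,\dots,N$. In $\mathbb{C}^2 \otimes \mathbb{C}^N$ define the unit vectors $w_k := \frac{1}{\sqrt{2}}\left( e_0 \otimes e_k - e_1 \otimes u_k \right)$ and the reflections $R_k := I - 2\, w_k w_k^{\dagger}$. Then the $R_k$ pairwise commute, and their product over all $k$ equals the block anti-diagonal unitary $\prod_{k=1}^N R_k = |1\rangle\langle 0| \otimes T + |0\rangle\langle 1| \otimes T^{\dagger} = \begin{pmatrix} 0 & T^\dagger \\ T & 0 \end{pmatrix}$; i.e., the product of these $N$ reflections implements $T$ and $T^\dagger$ controlled on an ancilla qubit flip. -/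
open Matrix Finset

namespace RefAux

variable {N : ℕ}

noncomputable def g (T : Matrix (Fin N) (Fin N) ℂ) (k : Fin N) : (Fin 2 × Fin N) → ℂ :=
  fun v => if v.1 = 0 then (if v.2 = k then 1 else 0) else -(T v.2 k)

noncomputable def G (T : Matrix (Fin N) (Fin N) ℂ) (k : Fin N) :
    Matrix (Fin 2 × Fin N) (Fin 2 × Fin N) ℂ :=
  Matrix.of fun v v' => g T k v * (starRingEnd ℂ) (g T k v')

lemma ortho (T : Matrix (Fin N) (Fin N) ℂ) (hT : T ∈ Matrix.unitaryGroup (Fin N) ℂ)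
    (k l : Fin N) :
    ∑ v : Fin 2 × Fin N, (starRingEnd ℂ) (g T k v) * g T l v =
      if k = l then 2 else 0 := by
  have hTT : Tᴴ * T = 1 := mem_unitaryGroup_iff'.mp hT
  have h2 : ∑ p, (starRingEnd ℂ) (T p k) * T p l = if k = l then 1 else 0 := by
    have := congrFun (congrFun hTT k) l
    simpa [Matrix.mul_apply, Matrix.conjTranspose_apply, Matrix.one_apply] using this
  rw [Fintype.sum_prod_type, Fin.sum_univ_two]
  have e1 : ∀ p : Fin N, (starRingEnd ℂ) (g T k (0, p)) * g T l (0, p)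
      = if p = k then (if p = l then (1:ℂ) else 0) else 0 := by
    intro p; simp only [g]; split_ifs <;> simp_all
  have e3 : ∀ p : Fin N, (starRingEnd ℂ) (g T k (1, p)) * g T l (1, p)
      = (starRingEnd ℂ) (T p k) * T p l := by
    intro p; simp only [g]; norm_num
  rw [Finset.sum_congr rfl fun p _ => e1 p, Finset.sum_congr rfl fun p _ => e3 p,
    Finset.sum_ite_eq' Finset.univ k fun p => if p = l then (1:ℂ) else 0, h2]
  simp only [Finset.mem_univ, if_true, eq_comm]
  split_ifs <;> norm_num

end RefAux

namespace RefAux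

lemma Gmul (T : Matrix (Fin N) (Fin N) ℂ) (hT : T ∈ Matrix.unitaryGroup (Fin N) ℂ)
    (k l : Fin N) :
    G T k * G T l = if k = l then (2:ℂ) • G T k else 0 := by
  ext v v'
  rw [Matrix.mul_apply]
  have : ∀ j : Fin 2 × Fin N, G T k v j * G T l j v'
      = (g T k v * (starRingEnd ℂ) (g T l v')) * ((starRingEnd ℂ) (g T k j) * g T l j) := by
    intro j; simp only [G, Matrix.of_apply]; ring
  rw [Finset.sum_congr rfl fun j _ => this j, ← Finset.mul_sum, ortho T hT]
  split_ifs with h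
  · subst h; simp only [Matrix.smul_apply, G, Matrix.of_apply, smul_eq_mul]; ring
  · simp

lemma sum_univ (T : Matrix (Fin N) (Fin N) ℂ) (hT : T ∈ Matrix.unitaryGroup (Fin N) ℂ) :
    (1 : Matrix (Fin 2 × Fin N) (Fin 2 × Fin N) ℂ) - ∑ l : Fin N, G T l =
    Matrix.of fun (v v' : Fin 2 × Fin N) =>
        if v.1 = 1 ∧ v'.1 = 0 then T v.2 v'.2
        else if v.1 = 0 ∧ v'.1 = 1 then (starRingEnd ℂ) (T v'.2 v.2)
        else 0 := by
  have hTT : T * Tᴴ = 1 := mem_unitaryGroup_iff.mp hT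
  have h2 : ∀ p p' : Fin N, ∑ l, T p l * (starRingEnd ℂ) (T p' l)
      = if p = p' then 1 else 0 := by
    intro p p'
    have := congrFun (congrFun hTT p) p'
    simpa [Matrix.mul_apply, Matrix.conjTranspose_apply, Matrix.one_apply] using this
  ext ⟨s, p⟩ ⟨s', p'⟩
  simp only [Matrix.sub_apply, Matrix.sum_apply, Matrix.of_apply, Matrix.one_apply]
  fin_cases s <;> fin_cases s' <;>
    simp only [G, g, Matrix.of_apply, Fin.isValue, Prod.mk.injEq, if_true, if_false] <;>
    norm_num
  rw [h2 p p', sub_self]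

end RefAux

namespace RefAux

lemma step (T : Matrix (Fin N) (Fin N) ℂ) (hT : T ∈ Matrix.unitaryGroup (Fin N) ℂ)
    (k : Fin N) (S : Finset (Fin N)) (hk : k ∉ S) :
    (1 - G T k) * (1 - ∑ l ∈ S, G T l) = 1 - ∑ l ∈ insert k S, G T l := by
  have h0 : ∑ l ∈ S, G T k * G T l = 0 := by
    apply Finset.sum_eq_zero
    intro l hl
    rw [Gmul T hT, if_neg (fun h => hk (by rwa [h]))]
  rw [Finset.sum_insert hk, sub_mul, one_mul, mul_sub, mul_one, Finset.mul_sum, h0]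
  abel

end RefAux

open RefAux in
/-- Reflection-based implementation of a unitary `T`: with columns `u_k = T e_k`,
the unit vectors `w_k = (e_0 ⊗ e_k - e_1 ⊗ u_k)/√2` and reflections
`R_k = I - 2 w_k w_k†` pairwise commute and (taking the product over all `k` in
any order, i.e. along any duplicate-free enumeration of `Fin N`) satisfy
`∏_k R_k = |1⟩⟨0| ⊗ T + |0⟩⟨1| ⊗ T†`. -/
theorem reflections_implement_unitary (N : ℕ) (hN : 1 ≤ N)
    (T : Matrix (Fin N) (Fin N) ℂ) (hT : T ∈ Matrix.unitaryGroup (Fin N) ℂ)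
    (w : Fin N → (Fin 2 × Fin N) → ℂ)
    (hw : ∀ k s p, w k (s, p) = ((Real.sqrt 2 : ℂ))⁻¹ *
      (if s = 0 then (if p = k then 1 else 0) else -(T p k)))
    (R : Fin N → Matrix (Fin 2 × Fin N) (Fin 2 × Fin N) ℂ)
    (hR : ∀ k, R k = 1 -
      (2 : ℂ) • Matrix.of fun v v' => w k v * (starRingEnd ℂ) (w k v')) :
    (∀ k l, R k * R l = R l * R k) ∧
    ∀ lst : List (Fin N), lst.Nodup → (∀ k, k ∈ lst) →
      (lst.map R).prod = Matrix.of fun (v v' : Fin 2 × Fin N) =>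
        if v.1 = 1 ∧ v'.1 = 0 then T v.2 v'.2
        else if v.1 = 0 ∧ v'.1 = 1 then (starRingEnd ℂ) (T v'.2 v.2)
        else 0 := by
  -- R k = 1 - G T k
  have hcc : ((Real.sqrt 2 : ℂ))⁻¹ * (starRingEnd ℂ) ((Real.sqrt 2 : ℂ))⁻¹ = 2⁻¹ := by
    rw [map_inv₀, Complex.conj_ofReal, ← mul_inv, ← Complex.ofReal_mul,
      Real.mul_self_sqrt two_pos.le]
    norm_num
  have hRG : ∀ k, R k = 1 - G T k := by
    intro k
    rw [hR k]
    congr 1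
    ext ⟨s, p⟩ ⟨s', p'⟩
    simp only [Matrix.smul_apply, Matrix.of_apply, G, smul_eq_mul]
    rw [hw, hw, _root_.map_mul]
    have e : ∀ s : Fin 2, ∀ p : Fin N,
        (if s = 0 then (if p = k then (1:ℂ) else 0) else -(T p k)) = g T k (s, p) := by
      intro s p; rfl
    rw [e, e]
    calc (2:ℂ) * (((Real.sqrt 2 : ℂ))⁻¹ * g T k (s, p) *
          ((starRingEnd ℂ) ((Real.sqrt 2 : ℂ))⁻¹ * (starRingEnd ℂ) (g T k (s', p'))))
        = 2 * (((Real.sqrt 2 : ℂ))⁻¹ * (starRingEnd ℂ) ((Real.sqrt 2 : ℂ))⁻¹) *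
          (g T k (s, p) * (starRingEnd ℂ) (g T k (s', p'))) := by ring
      _ = g T k (s, p) * (starRingEnd ℂ) (g T k (s', p')) := by rw [hcc]; ring
  constructor
  · intro k l
    rcases eq_or_ne k l with rfl | hkl
    · rfl
    · rw [hRG, hRG]
      have h1 : G T k * G T l = 0 := by rw [Gmul T hT, if_neg hkl]
      have h2 : G T l * G T k = 0 := by rw [Gmul T hT, if_neg hkl.symm]
      rw [sub_mul, one_mul, mul_sub, mul_one, h1, sub_mul, one_mul, mul_sub, mul_one, h2]
      abel
  · have hprod : ∀ lst : List (Fin N), lst.Nodup →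
        (lst.map R).prod = 1 - ∑ l ∈ lst.toFinset, G T l := by
      intro lst
      induction lst with
      | nil => intro _; simp
      | cons k tl ih =>
        intro hnd
        rw [List.map_cons, List.prod_cons, ih (List.nodup_cons.mp hnd).2, hRG k,
          List.toFinset_cons]
        exact step T hT k tl.toFinset
          (by simpa using (List.nodup_cons.mp hnd).1)
    intro lst hnd hall
    rw [hprod lst hnd,
      Finset.eq_univ_iff_forall.mpr (fun k => List.mem_toFinset.mpr (hall k))]
    exact sum_univ T hT
end
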